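/- Let K be a field and let A = {t_4, t_1 t_4, t_2 t_4, t_3 t_4, t_1 t_2 t_4, t_2 t_3 t_4, t_1 t_3 t_4, t_1 t_2 t_3 t_4} ⊆ K[t_1, t_2, t_3, t_4], with toric ideal I_A ⊆ K[x_1,...,x_8] (with x_1 ↦ t_4, x_2 ↦ t_1 t_4, x_3 ↦ t_2 t_4, x_4 ↦ t_3 t_4, x_5 ↦ t_1 t_2 t_4, x_6 ↦ t_2 t_3 t_4, x_7 ↦ t_1 t_3 t_4, x_8 ↦ t_1 t_2 t_3 t_4). Let <_rlex be the reverse lexicographic order induced by the ordering x_4 < x_3 < x_2 < x_1 < x_8 < x_7 < x_6 < x_5. Then the cubic monomial x_2 x_3 x_8 belongs to G(in_{<_rlex}(I_A)); in particular, the reduced Gröbner basis of I_A with respect to <_rlex is not quadratic, even though K[A] is strongly Koszul. -/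

import Mathlib

/-!
Common definitions: toric ideals/rings of monomial families, strong Koszulness
with respect to a system of algebra generators, initial ideals with respect to
a relation on exponent vectors, (reduced) Gröbner bases, the (graded) reverse
lexicographic order induced by an ordering of the variables, minimal monomial
generators, and compressedness.
-/

open MvPolynomial

noncomputable section

/-- The total degree of an exponent vector. -/
def expDeg {n : ℕ} (d : Fin n →₀ ℕ) : ℕ := d.sum fun _ e => e

/-- The toric ideal `I_A ⊆ K[x_1,…,x_n]` of the family of monomials
`u i = t^(a i)` in `K[t_1,…,t_d]`: the kernel of `π : x_i ↦ u_i`. -/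
def toricIdeal (K : Type) [Field K] {n d : ℕ} (a : Fin n → (Fin d →₀ ℕ)) :
    Ideal (MvPolynomial (Fin n) K) :=
  RingHom.ker (MvPolynomial.aeval
    (fun i => (MvPolynomial.monomial (a i) (1 : K) : MvPolynomial (Fin d) K)) :
      MvPolynomial (Fin n) K →ₐ[K] MvPolynomial (Fin d) K).toRingHom

/-- The toric ring `K[A] ⊆ K[t_1,…,t_d]` generated by the monomials `t^(a i)`. -/
def toricRing (K : Type) [Field K] {n d : ℕ} (a : Fin n → (Fin d →₀ ℕ)) :
    Subalgebra K (MvPolynomial (Fin d) K) :=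
  Algebra.adjoin K (Set.range fun i => (MvPolynomial.monomial (a i) (1 : K)))

/-- The generator `u_i = t^(a i)`, as an element of the toric ring `K[A]`. -/
def toricGen (K : Type) [Field K] {n d : ℕ} (a : Fin n → (Fin d →₀ ℕ)) (i : Fin n) :
    toricRing K a :=
  ⟨MvPolynomial.monomial (a i) (1 : K), Algebra.subset_adjoin (Set.mem_range_self i)⟩

/-- A commutative ring `R` is strongly Koszul with respect to the system of
generators `u_1,…,u_n` (of its maximal graded ideal) if for every chain
`i_1 < i_2 < ⋯ < i_r` of indices and every `j = 1,…,r` the colon ideal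
`(u_{i_1},…,u_{i_{j-1}}) : u_{i_j}` is generated by a subset of `{u_1,…,u_n}`. -/
def StronglyKoszulWith {R : Type} [CommRing R] {n : ℕ} (u : Fin n → R) : Prop :=
  ∀ (r : ℕ) (c : Fin r → Fin n), StrictMono c → ∀ j : Fin r,
    ∃ S : Set R, S ⊆ Set.range u ∧
      Submodule.colon (Ideal.span ((fun k => u (c k)) '' {k : Fin r | k < j}))
        (Ideal.span {u (c j)}) = Ideal.span S

/-- The toric ring `K[A]` is strongly Koszul (with respect to its monomial
generators `u_1,…,u_n`, which form its distinguished minimal system of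
generators of the same degree). -/
def ToricStronglyKoszul (K : Type) [Field K] {n d : ℕ} (a : Fin n → (Fin d →₀ ℕ)) : Prop :=
  StronglyKoszulWith (toricGen K a)

/-- `dd` is the exponent vector of the initial (leading) monomial of `f` with
respect to the strict comparison `lt` on exponent vectors. -/
def IsInitialExp {K : Type} [Field K] {n : ℕ}
    (lt : (Fin n →₀ ℕ) → (Fin n →₀ ℕ) → Prop)
    (f : MvPolynomial (Fin n) K) (dd : Fin n →₀ ℕ) : Prop :=
  dd ∈ f.support ∧ ∀ d' ∈ f.support, d' ≠ dd → lt d' dd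

/-- The initial ideal `in_lt(I)`: the monomial ideal generated by the initial
monomials of the nonzero elements of `I`. -/
def initialIdeal {K : Type} [Field K] {n : ℕ}
    (lt : (Fin n →₀ ℕ) → (Fin n →₀ ℕ) → Prop)
    (I : Ideal (MvPolynomial (Fin n) K)) : Ideal (MvPolynomial (Fin n) K) :=
  Ideal.span {m | ∃ f ∈ I, ∃ dd, IsInitialExp lt f dd ∧
    m = MvPolynomial.monomial dd (1 : K)}

/-- `G` is the reduced Gröbner basis of `I` with respect to the strict
comparison `lt` (coming from a monomial order): the elements of `G` lie in `I`,
are monic, their initial monomials generate the initial ideal of `I`,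
and no monomial occurring in an element of `G` is divisible by the initial
monomial of another element of `G`. -/
def IsReducedGB {K : Type} [Field K] {n : ℕ}
    (lt : (Fin n →₀ ℕ) → (Fin n →₀ ℕ) → Prop)
    (I : Ideal (MvPolynomial (Fin n) K)) (G : Finset (MvPolynomial (Fin n) K)) : Prop :=
  (∀ g ∈ G, g ∈ I) ∧
  (∀ g ∈ G, ∃ dd, IsInitialExp lt g dd ∧ MvPolynomial.coeff dd g = 1) ∧
  (initialIdeal lt I =
    Ideal.span {m | ∃ g ∈ G, ∃ dd, IsInitialExp lt g dd ∧
      m = MvPolynomial.monomial dd (1 : K)}) ∧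
  (∀ g ∈ G, ∀ g' ∈ G, g' ≠ g → ∀ d' ∈ g.support, ∀ dd, IsInitialExp lt g' dd → ¬ dd ≤ d')

/-- The strict comparison of the (graded) reverse lexicographic order induced by
the ordering `x_{ord 0} < x_{ord 1} < ⋯ < x_{ord (n-1)}` of the variables:
`x < y` iff `deg x < deg y`, or the degrees agree and `x` has a strictly larger
exponent than `y` at the smallest variable where they differ. -/
def rlexLT {n : ℕ} (ord : Fin n ≃ Fin n) (x y : Fin n →₀ ℕ) : Prop :=
  expDeg x < expDeg y ∨ (expDeg x = expDeg y ∧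
    ∃ p : Fin n, y (ord p) < x (ord p) ∧ ∀ q : Fin n, q < p → x (ord q) = y (ord q))

/-- `dd` is (the exponent vector of) a member of `G(I)`, the minimal system of
monomial generators of the monomial ideal `I`: the monomial `x^dd` lies in `I`
but no proper divisor of it does. -/
def IsMinGen {K : Type} [Field K] {n : ℕ} (I : Ideal (MvPolynomial (Fin n) K))
    (dd : Fin n →₀ ℕ) : Prop :=
  MvPolynomial.monomial dd (1 : K) ∈ I ∧
  ∀ d' : Fin n →₀ ℕ, d' ≤ dd → d' ≠ dd → MvPolynomial.monomial d' (1 : K) ∉ I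

/-- The toric ring `K[A]` is compressed: the initial ideal of `I_A` is radical
for every reverse lexicographic order. -/
def ToricCompressed (K : Type) [Field K] {n d : ℕ} (a : Fin n → (Fin d →₀ ℕ)) : Prop :=
  ∀ ord : Fin n ≃ Fin n,
    (initialIdeal (rlexLT ord) (toricIdeal K a)).radical
      = initialIdeal (rlexLT ord) (toricIdeal K a)

/-- The strict comparison on exponent vectors associated to a monomial order. -/
def MonomialOrder.ltRel {σ : Type*} (m : MonomialOrder σ) :
    (σ →₀ ℕ) → (σ →₀ ℕ) → Prop :=
  fun a b => m.toSyn a < m.toSyn b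

/-- A quadratic binomial: a difference of two (monic) monomials of degree 2. -/
def IsQuadBinomial {K : Type} [Field K] {n : ℕ} (g : MvPolynomial (Fin n) K) : Prop :=
  ∃ b c : Fin n →₀ ℕ, expDeg b = 2 ∧ expDeg c = 2 ∧
    g = MvPolynomial.monomial b (1 : K) - MvPolynomial.monomial c (1 : K)

end

open MvPolynomial

noncomputable section

/-- The exponent vectors of the eight monomials
`A = {t_4, t_1 t_4, t_2 t_4, t_3 t_4, t_1 t_2 t_4, t_2 t_3 t_4, t_1 t_3 t_4,
t_1 t_2 t_3 t_4}` in `K[t_1, t_2, t_3, t_4]` (0-indexed variables `t`). -/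
def stExp : Fin 8 → (Fin 4 →₀ ℕ)
  | 0 => Finsupp.single 3 1
  | 1 => Finsupp.single 0 1 + Finsupp.single 3 1
  | 2 => Finsupp.single 1 1 + Finsupp.single 3 1
  | 3 => Finsupp.single 2 1 + Finsupp.single 3 1
  | 4 => Finsupp.single 0 1 + Finsupp.single 1 1 + Finsupp.single 3 1
  | 5 => Finsupp.single 1 1 + Finsupp.single 2 1 + Finsupp.single 3 1
  | 6 => Finsupp.single 0 1 + Finsupp.single 2 1 + Finsupp.single 3 1
  | 7 => Finsupp.single 0 1 + Finsupp.single 1 1 + Finsupp.single 2 1 + Finsupp.single 3 1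

/-- The ordering `x_4 < x_3 < x_2 < x_1 < x_8 < x_7 < x_6 < x_5` of the
variables (0-indexed: `x_i` is variable `i - 1`); `ord13 p` is the `p`-th
smallest variable. -/
def ord13 : Fin 8 ≃ Fin 8 :=
  ⟨![3, 2, 1, 0, 7, 6, 5, 4], ![3, 2, 1, 0, 7, 6, 5, 4], by decide, by decide⟩

/-!
The binomial `x₂x₃x₈ - x₄x₅²` lies in `I_A` and its initial term is `x₂x₃x₈`. A monomial can
only be the initial term of an element of `I_A` if its fibre under `π` contains a smaller
monomial; every proper divisor of `x₂x₃x₈` is the smallest monomial of its fibre, so none lies in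
`in(I_A)` and `x₂x₃x₈` is a minimal generator, of degree three. A reduced Gröbner basis contains
an element with each minimal generator as initial term, so it cannot be quadratic.

For strong Koszulness, `K[A]` is the semigroup ring of the normal cone `{b | b_i ≤ b_4}`, and
`(u_P) : u_T` is generated by the `u_k` with `u_k u_T ∈ u_p K[A]` for some `p ∈ P`: if
`t^b u_T ∈ u_p K[A]`, then `t^b ∈ u_k K[A]` for the `u_k` whose support is
`{i | b_i = b_4} ∪ (p \ T)`.
-/

section Toric

variable {K : Type} [Field K] {n d : ℕ} (a : Fin n → (Fin d →₀ ℕ))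

def toricExp (e : Fin n →₀ ℕ) : Fin d →₀ ℕ := ∑ k, e k • a k

theorem aeval_monomial_toric (e : Fin n →₀ ℕ) (c : K) :
    aeval (fun i => (monomial (a i) 1 : MvPolynomial (Fin d) K)) (monomial e c) =
      monomial (toricExp a e) c := by
  rw [aeval_monomial, Finsupp.prod_fintype _ _ (by simp), toricExp, monomial_sum_index]
  simp [monomial_pow, algebraMap_eq]

theorem monomial_sub_monomial_mem_toricIdeal {e e' : Fin n →₀ ℕ}
    (h : toricExp a e = toricExp a e') :
    monomial e (1 : K) - monomial e' 1 ∈ toricIdeal K a := by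
  rw [toricIdeal, RingHom.mem_ker, AlgHom.toRingHom_eq_coe, RingHom.coe_coe, map_sub,
    aeval_monomial_toric, aeval_monomial_toric, h, sub_self]

theorem exists_ne_toricExp_eq_of_mem_toricIdeal {f : MvPolynomial (Fin n) K}
    (hf : f ∈ toricIdeal K a) {e : Fin n →₀ ℕ} (he : e ∈ f.support) :
    ∃ e' ∈ f.support, e' ≠ e ∧ toricExp a e' = toricExp a e := by
  by_contra! hfib
  have hsum : ∑ e' ∈ f.support, monomial (toricExp a e') (f.coeff e') = 0 := by
    simp_rw [← aeval_monomial_toric, ← map_sum, support_sum_monomial_coeff]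
    exact hf
  have hcoeff := congrArg (coeff (toricExp a e)) hsum
  rw [coeff_sum, coeff_zero, Finset.sum_eq_single_of_mem e he fun e' he' hne => by
    rw [coeff_monomial, if_neg (hfib e' he' hne)], coeff_monomial, if_pos rfl] at hcoeff
  exact mem_support_iff.1 he hcoeff

end Toric

section Initial

variable {K : Type} [Field K] {n : ℕ} {lt : (Fin n →₀ ℕ) → (Fin n →₀ ℕ) → Prop}

theorem expDeg_eq_sum (e : Fin n →₀ ℕ) : expDeg e = ∑ k, e k :=
  Finsupp.sum_fintype _ _ fun _ => rfl

theorem rlexLT_asymm (ord : Fin n ≃ Fin n) {x y : Fin n →₀ ℕ} (h : rlexLT ord x y) :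
    ¬ rlexLT ord y x := by
  rintro (hdeg' | ⟨hdeg', p', hp', hq'⟩) <;> rcases h with hdeg | ⟨hdeg, p, hp, hq⟩
  all_goals try omega
  rcases lt_trichotomy p p' with hpp | rfl | hpp
  · exact absurd (hq' p hpp) (by omega)
  · omega
  · exact absurd (hq p' hpp) (by omega)

theorem monomial_mem_span_initial_iff (S : Set (MvPolynomial (Fin n) K)) {d : Fin n →₀ ℕ} :
    monomial d (1 : K) ∈
        Ideal.span {m | ∃ f ∈ S, ∃ e, IsInitialExp lt f e ∧ m = monomial e (1 : K)} ↔
      ∃ f ∈ S, ∃ e, IsInitialExp lt f e ∧ e ≤ d := by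
  classical
  have hset : {m | ∃ f ∈ S, ∃ e, IsInitialExp lt f e ∧ m = monomial e (1 : K)} =
      (fun e => monomial e (1 : K)) '' {e | ∃ f ∈ S, IsInitialExp lt f e} :=
    Set.ext fun _ => ⟨fun ⟨f, hf, e, he, hm⟩ => ⟨e, ⟨f, hf, he⟩, hm.symm⟩,
      fun ⟨e, ⟨f, hf, he⟩, hm⟩ => ⟨f, hf, e, he, hm.symm⟩⟩
  rw [hset, mem_ideal_span_monomial_image, support_monomial, if_neg one_ne_zero]
  simp only [Finset.mem_singleton, forall_eq, Set.mem_ofPred_eq]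
  exact ⟨fun ⟨e, ⟨f, hf, he⟩, hed⟩ => ⟨f, hf, e, he, hed⟩,
    fun ⟨f, hf, e, he, hed⟩ => ⟨e, ⟨f, hf, he⟩, hed⟩⟩

theorem isInitialExp_monomial_sub_monomial {d e : Fin n →₀ ℕ} (hne : e ≠ d) (hlt : lt e d) :
    IsInitialExp lt (monomial d (1 : K) - monomial e 1) d := by
  refine ⟨by simp [mem_support_iff, coeff_monomial, hne], fun d' hd' hd'ne => ?_⟩
  obtain rfl : d' = e := by
    by_contra hd'e
    simp [mem_support_iff, coeff_monomial, Ne.symm hd'ne, Ne.symm hd'e] at hd'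
  exact hlt

theorem not_isInitialExp_of_mem_toricIdeal {d : ℕ} {a : Fin n → (Fin d →₀ ℕ)}
    {f : MvPolynomial (Fin n) K} (hf : f ∈ toricIdeal K a) {e : Fin n →₀ ℕ}
    (hmin : ∀ e', toricExp a e' = toricExp a e → e' ≠ e → ¬ lt e' e) :
    ¬ IsInitialExp lt f e := fun ⟨he, hlt⟩ =>
  let ⟨e', he', hne, hfib⟩ := exists_ne_toricExp_eq_of_mem_toricIdeal a hf he
  hmin e' hfib hne (hlt e' he' hne)

theorem isMinGen_initialIdeal_toricIdeal {d : ℕ} {a : Fin n → (Fin d →₀ ℕ)}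
    {e₁ e₂ : Fin n →₀ ℕ} (hfib : toricExp a e₁ = toricExp a e₂) (hne : e₂ ≠ e₁)
    (hlt : lt e₂ e₁)
    (hmin : ∀ e < e₁, ∀ e', toricExp a e' = toricExp a e → e' ≠ e → ¬ lt e' e) :
    IsMinGen (initialIdeal lt (toricIdeal K a)) e₁ := by
  refine ⟨Ideal.subset_span ⟨_, monomial_sub_monomial_mem_toricIdeal a hfib, e₁,
    isInitialExp_monomial_sub_monomial hne hlt, rfl⟩, fun e hle hne hmem => ?_⟩
  obtain ⟨f, hf, e', he', he'le⟩ := (monomial_mem_span_initial_iff _).1 hmem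
  exact not_isInitialExp_of_mem_toricIdeal hf
    (hmin e' (he'le.trans_lt (lt_of_le_of_ne hle hne))) he'

theorem exists_isInitialExp_of_isMinGen {I : Ideal (MvPolynomial (Fin n) K)}
    {G : Finset (MvPolynomial (Fin n) K)} (hG : IsReducedGB lt I G) {e : Fin n →₀ ℕ}
    (he : IsMinGen (initialIdeal lt I) e) : ∃ g ∈ G, IsInitialExp lt g e := by
  obtain ⟨hGI, -, hspan, -⟩ := hG
  have hmem : monomial e (1 : K) ∈ Ideal.span {m | ∃ g ∈ (G : Set (MvPolynomial (Fin n) K)),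
      ∃ e, IsInitialExp lt g e ∧ m = monomial e 1} := by
    simpa only [Finset.mem_coe, ← hspan] using he.1
  obtain ⟨g, hg, e', he', he'le⟩ := (monomial_mem_span_initial_iff _).1 hmem
  obtain rfl : e' = e := by
    by_contra hne
    exact he.2 e' he'le hne (Ideal.subset_span ⟨g, hGI g hg, e', he', rfl⟩)
  exact ⟨g, hg, he'⟩

theorem expDeg_eq_two_of_isQuadBinomial {g : MvPolynomial (Fin n) K} (hg : IsQuadBinomial g)
    {e : Fin n →₀ ℕ} (he : e ∈ g.support) : expDeg e = 2 := by
  obtain ⟨b, c, hb, hc, rfl⟩ := hg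
  by_contra h
  have hbe : b ≠ e := by rintro rfl; exact h hb
  have hce : c ≠ e := by rintro rfl; exact h hc
  simp [mem_support_iff, coeff_monomial, hbe, hce] at he

end Initial

section ToricRing

variable {K : Type} [Field K] {n d : ℕ} (a : Fin n → (Fin d →₀ ℕ))

abbrev toricSemigroup : AddSubmonoid (Fin d →₀ ℕ) := AddSubmonoid.closure (Set.range a)

theorem toricRing_toSubmodule :
    Subalgebra.toSubmodule (toricRing K a) = restrictSupport K (toricSemigroup a) := by
  have hrange : Set.range (fun i => (monomial (a i) (1 : K))) =
      monomialOneHom K (Fin d) '' (Multiplicative.toAdd ⁻¹' Set.range a) := by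
    ext m
    simp only [Set.mem_range, Set.mem_image, Set.mem_preimage, Multiplicative.exists,
      toAdd_ofAdd, exists_exists_eq_and]
    rfl
  rw [toricRing, Algebra.adjoin_eq_span, restrictSupport_eq_span, hrange,
    ← MonoidHom.map_mclosure, ← AddSubmonoid.toSubmonoid_closure]
  rfl

theorem mem_toricRing_iff {f : MvPolynomial (Fin d) K} :
    f ∈ toricRing K a ↔ ↑f.support ⊆ (toricSemigroup a : Set (Fin d →₀ ℕ)) := by
  rw [← Subalgebra.mem_toSubmodule, toricRing_toSubmodule, mem_restrictSupport_iff]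

theorem mem_span_toricGen_of_forall (P : Set (Fin n)) (y : toricRing K a)
    (h : ∀ b ∈ (y : MvPolynomial (Fin d) K).support,
      ∃ p ∈ P, ∃ c ∈ toricSemigroup a, b = a p + c) :
    y ∈ Ideal.span (toricGen K a '' P) := by
  suffices (y : MvPolynomial (Fin d) K) ∈
      ((Ideal.span (toricGen K a '' P)).restrictScalars K).map
        (toricRing K a).val.toLinearMap by
    obtain ⟨z, hz, hzy⟩ := this
    rwa [Subtype.val_injective hzy] at hz
  rw [← support_sum_monomial_coeff (y : MvPolynomial (Fin d) K)]
  refine Submodule.sum_mem _ fun b hb => ?_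
  obtain ⟨p, hp, c, hc, rfl⟩ := h b hb
  have hmono : monomial c (coeff (a p + c) (y : MvPolynomial (Fin d) K)) ∈ toricRing K a := by
    rw [mem_toricRing_iff]
    exact (Finset.coe_subset.2 support_monomial_subset).trans (by simpa using hc)
  refine ⟨⟨_, hmono⟩ * toricGen K a p,
    Ideal.mul_mem_left _ _ (Ideal.subset_span ⟨p, hp, rfl⟩), ?_⟩
  simp only [AlgHom.toLinearMap_apply, Subalgebra.coe_val, Subalgebra.coe_mul, toricGen,
    monomial_mul, mul_one, add_comm]

theorem mem_span_toricGen_iff (P : Set (Fin n)) (y : toricRing K a) :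
    y ∈ Ideal.span (toricGen K a '' P) ↔ ∀ b ∈ (y : MvPolynomial (Fin d) K).support,
      ∃ p ∈ P, ∃ c ∈ toricSemigroup a, b = a p + c := by
  classical
  refine ⟨fun hy => ?_, mem_span_toricGen_of_forall a P y⟩
  induction hy using Submodule.span_induction with
  | mem x hx =>
    obtain ⟨p, hp, rfl⟩ := hx
    intro b hb
    obtain rfl : b = a p := by
      by_contra hne
      simp [toricGen, mem_support_iff, coeff_monomial, Ne.symm hne] at hb
    exact ⟨p, hp, 0, zero_mem _, (add_zero _).symm⟩
  | zero => simp
  | add x z _ _ hx hz =>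
    intro b hb
    rcases Finset.mem_union.1 (support_add hb) with hb | hb
    · exact hx b hb
    · exact hz b hb
  | smul r x _ hx =>
    intro b hb
    obtain ⟨c, hc, b', hb', rfl⟩ := Finset.mem_add.1 (support_mul _ _ hb)
    obtain ⟨p, hp, c', hc', rfl⟩ := hx b' hb'
    exact ⟨p, hp, c + c', add_mem ((mem_toricRing_iff a).1 r.2 hc) hc', by abel⟩

def colonGens (P : Set (Fin n)) (T : Fin n) : Set (Fin n) :=
  {k | ∃ p ∈ P, ∃ m, a k + a T = a p + a m}

theorem colon_span_toricGen_eq (P : Set (Fin n)) (T : Fin n)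
    (h : ∀ b ∈ toricSemigroup a, ∀ p ∈ P, ∀ c ∈ toricSemigroup a, b + a T = a p + c →
      ∃ k ∈ colonGens a P T, ∃ c' ∈ toricSemigroup a, b = a k + c') :
    (Ideal.span (toricGen K a '' P)).colon (Ideal.span {toricGen K a T}) =
      Ideal.span (toricGen K a '' colonGens a P T) := by
  classical
  apply le_antisymm
  · intro x hx
    rw [Ideal.span, Submodule.mem_colon_span_singleton, smul_eq_mul,
      mem_span_toricGen_iff] at hx
    rw [mem_span_toricGen_iff]
    intro b hb
    have hbT : b + a T ∈
        ((x * toricGen K a T : toricRing K a) : MvPolynomial (Fin d) K).support := by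
      simpa [toricGen, mem_support_iff, coeff_mul_monomial] using hb
    obtain ⟨p, hp, c, hc, hpc⟩ := hx _ hbT
    exact h b ((mem_toricRing_iff a).1 x.2 hb) p hp c hc hpc
  · rw [Ideal.span_le]
    rintro _ ⟨k, ⟨p, hp, m, hm⟩, rfl⟩
    rw [SetLike.mem_coe, Ideal.span, Submodule.mem_colon_span_singleton, smul_eq_mul,
      mem_span_toricGen_iff]
    intro b hb
    obtain rfl : b = a k + a T := by
      by_contra hne
      simp [toricGen, monomial_mul, mem_support_iff, coeff_monomial, Ne.symm hne] at hb
    exact ⟨p, hp, a m, AddSubmonoid.subset_closure ⟨m, rfl⟩, hm⟩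

theorem toricStronglyKoszul_of_forall_colonGens (h : ∀ (P : Set (Fin n)), ∀ T ∉ P,
    ∀ b ∈ toricSemigroup a, ∀ p ∈ P, ∀ c ∈ toricSemigroup a, b + a T = a p + c →
      ∃ k ∈ colonGens a P T, ∃ c' ∈ toricSemigroup a, b = a k + c') :
    ToricStronglyKoszul K a := by
  intro r c hc j
  refine ⟨toricGen K a '' colonGens a (c '' {k | k < j}) (c j), Set.image_subset_range _ _, ?_⟩
  rw [← Set.image_image]
  refine colon_span_toricGen_eq a _ _ (h _ _ ?_)
  rintro ⟨k, hk, hkj⟩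
  exact (hc hk).ne hkj

end ToricRing

section StableSet

theorem stExp_apply (k : Fin 8) (i : Fin 4) :
    stExp k i = (![![0, 0, 0, 1], ![1, 0, 0, 1], ![0, 1, 0, 1], ![0, 0, 1, 1], ![1, 1, 0, 1],
      ![0, 1, 1, 1], ![1, 0, 1, 1], ![1, 1, 1, 1]] : Fin 8 → Fin 4 → ℕ) k i := by
  fin_cases k <;> fin_cases i <;> simp [stExp]

theorem stExp_apply_three (k : Fin 8) : stExp k 3 = 1 := by
  rw [stExp_apply]; revert k; decide

theorem stExp_apply_le_one (k : Fin 8) (i : Fin 4) : stExp k i ≤ 1 := by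
  rw [stExp_apply]; revert k i; decide

theorem stExp_injective : Function.Injective stExp := by
  intro k k' h
  have h' : ∀ i, stExp k i = stExp k' i := fun i => by rw [h]
  simp only [stExp_apply] at h'
  clear h
  revert k k'; decide

theorem exists_stExp_eq (f : Fin 4 → ℕ) (h3 : f 3 = 1) (hle : ∀ i, f i ≤ 1) :
    ∃ k, ⇑(stExp k) = f := by
  obtain ⟨w, rfl⟩ : ∃ w : Fin 4 → Fin 2, f = fun i => (w i : ℕ) :=
    ⟨fun i => ⟨f i, Nat.lt_succ_of_le (hle i)⟩, rfl⟩
  simp only [funext_iff, stExp_apply]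
  clear hle
  revert w; decide

theorem mem_toricSemigroup_stExp_iff {b : Fin 4 →₀ ℕ} :
    b ∈ toricSemigroup stExp ↔ ∀ i, b i ≤ b 3 := by
  constructor
  · intro hb
    induction hb using AddSubmonoid.closure_induction with
    | mem x hx =>
      obtain ⟨k, rfl⟩ := hx
      exact fun i => (stExp_apply_le_one k i).trans (stExp_apply_three k).ge
    | zero => simp
    | add x y _ _ hx hy => exact fun i => add_le_add (hx i) (hy i)
  · intro hb
    induction h3 : b 3 generalizing b with
    | zero =>
      obtain rfl : b = 0 := by
        ext i
        have := hb i
        simp only [Finsupp.coe_zero, Pi.zero_apply]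
        omega
      exact zero_mem _
    | succ m ih =>
      obtain ⟨k, hk⟩ := exists_stExp_eq (fun i => if b i = b 3 then 1 else 0) (by simp)
        fun i => by split <;> omega
      have hki (i : Fin 4) : stExp k i = if b i = b 3 then 1 else 0 := congrFun hk i
      have hle : stExp k ≤ b := fun i => by have := hb i; rw [hki]; split <;> omega
      rw [← add_tsub_cancel_of_le hle]
      refine add_mem (AddSubmonoid.subset_closure ⟨k, rfl⟩) (ih (fun i => ?_) ?_)
      · have := hb i
        simp only [Finsupp.tsub_apply, hki]
        split_ifs <;> omega
      · simp [hki, h3]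

theorem exists_mem_colonGens_of_add_eq {P : Set (Fin 8)} {p T : Fin 8} (hp : p ∈ P)
    (hpT : p ≠ T) {b c : Fin 4 →₀ ℕ} (hb : ∀ i, b i ≤ b 3) (hc : ∀ i, c i ≤ c 3)
    (h : b + stExp T = stExp p + c) :
    ∃ k ∈ colonGens stExp P T, ∃ c', (∀ i, c' i ≤ c' 3) ∧ b = stExp k + c' := by
  have hcoord (i : Fin 4) : b i + stExp T i = stExp p i + c i := by
    simpa using congrArg (· i) h
  have hbc : b 3 = c 3 := by
    have := hcoord 3
    rw [stExp_apply_three, stExp_apply_three] at this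
    omega
  have hb3 : 1 ≤ b 3 := by
    by_contra! h0
    refine hpT (stExp_injective (Finsupp.ext fun i => ?_))
    have := hcoord i; have := hb i; have := hc i
    omega
  -- `b i = b 3` never happens where `T` has a `1` and `p` a `0`, since there `b i < c i ≤ c 3`.
  obtain ⟨k, hk⟩ := exists_stExp_eq
    (fun i => if b i = b 3 ∨ (stExp p i = 1 ∧ stExp T i = 0) then 1 else 0) (by simp)
    fun i => by split <;> omega
  have hfacts (i : Fin 4) :
      (stExp k i = if b i = b 3 ∨ (stExp p i = 1 ∧ stExp T i = 0) then 1 else 0) ∧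
        b i + stExp T i = stExp p i + c i ∧ b i ≤ b 3 ∧ c i ≤ c 3 ∧
        stExp p i ≤ 1 ∧ stExp T i ≤ 1 :=
    ⟨congrFun hk i, hcoord i, hb i, hc i, stExp_apply_le_one p i, stExp_apply_le_one T i⟩
  obtain ⟨m, hm⟩ := exists_stExp_eq (fun i => stExp k i + stExp T i - stExp p i)
    (by simp [stExp_apply_three]) fun i => by
      obtain ⟨hki, h₁, h₂, h₃, h₄, h₅⟩ := hfacts i
      split_ifs at hki <;> omega
  refine ⟨k, ⟨p, hp, m, Finsupp.ext fun i => ?_⟩, b - stExp k, fun i => ?_,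
    (add_tsub_cancel_of_le fun i => ?_).symm⟩
  all_goals obtain ⟨hki, h₁, h₂, h₃, h₄, h₅⟩ := hfacts i
  · have hmi := congrFun hm i
    simp only [Finsupp.coe_add, Pi.add_apply] at hmi ⊢
    split_ifs at hki <;> omega
  · simp only [Finsupp.tsub_apply, stExp_apply_three]
    split_ifs at hki <;> omega
  · split_ifs at hki <;> omega

theorem toricStronglyKoszul_stExp (K : Type) [Field K] : ToricStronglyKoszul K stExp := by
  refine toricStronglyKoszul_of_forall_colonGens stExp fun P T hT b hb p hp c hc h => ?_
  rw [mem_toricSemigroup_stExp_iff] at hb hc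
  obtain ⟨k, hk, c', hc', rfl⟩ :=
    exists_mem_colonGens_of_add_eq hp (by rintro rfl; exact hT hp) hb hc h
  exact ⟨k, hk, c', mem_toricSemigroup_stExp_iff.2 hc', rfl⟩

theorem toricExp_stExp_apply (e : Fin 8 →₀ ℕ) :
    toricExp stExp e 0 = e 1 + e 4 + e 6 + e 7 ∧ toricExp stExp e 1 = e 2 + e 4 + e 5 + e 7 ∧
      toricExp stExp e 2 = e 3 + e 5 + e 6 + e 7 ∧
      toricExp stExp e 3 = e 0 + e 1 + e 2 + e 3 + e 4 + e 5 + e 6 + e 7 := by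
  simp [toricExp, Fin.sum_univ_eight, stExp]

-- In the paper's 1-indexed variables these are `x₂x₃x₈` and `x₄x₅²`.
def cubicLeadExp : Fin 8 →₀ ℕ := Finsupp.single 1 1 + Finsupp.single 2 1 + Finsupp.single 7 1

def cubicTrailExp : Fin 8 →₀ ℕ := Finsupp.single 3 1 + Finsupp.single 4 2

theorem expDeg_cubicLeadExp : expDeg cubicLeadExp = 3 := by
  simp [expDeg_eq_sum, Fin.sum_univ_eight, cubicLeadExp]

theorem toricExp_cubicLeadExp : toricExp stExp cubicLeadExp = toricExp stExp cubicTrailExp := by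
  ext i
  fin_cases i <;> simp [toricExp_stExp_apply, cubicLeadExp, cubicTrailExp]

theorem rlexLT_cubicTrailExp_cubicLeadExp : rlexLT ord13 cubicTrailExp cubicLeadExp :=
  Or.inr ⟨by simp [expDeg_eq_sum, Fin.sum_univ_eight, cubicLeadExp, cubicTrailExp],
    0, by simp [ord13, cubicLeadExp, cubicTrailExp], fun q hq => absurd hq (Fin.not_lt_zero q)⟩

theorem rlexLT_of_toricExp_eq_of_lt_cubicLeadExp {e e' : Fin 8 →₀ ℕ} (hlt : e < cubicLeadExp)
    (h : toricExp stExp e' = toricExp stExp e) (he' : e' ≠ e) : rlexLT ord13 e e' := by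
  have hcoord : e 0 = 0 ∧ e 1 ≤ 1 ∧ e 2 ≤ 1 ∧ e 3 = 0 ∧ e 4 = 0 ∧ e 5 = 0 ∧ e 6 = 0 ∧
      e 7 ≤ 1 := by
    simpa [Finsupp.le_def, Fin.forall_fin_succ, cubicLeadExp] using hlt.le
  have hproper : ¬ (e 1 = 1 ∧ e 2 = 1 ∧ e 7 = 1) := by
    rintro ⟨h1, h2, h7⟩
    exact hlt.not_ge fun k => by fin_cases k <;> simp [cubicLeadExp, h1, h2, h7]
  have hfib (i : Fin 4) : toricExp stExp e' i = toricExp stExp e i := by rw [h]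
  have q0 := hfib 0; have q1 := hfib 1; have q2 := hfib 2; have q3 := hfib 3
  simp only [toricExp_stExp_apply] at q0 q1 q2 q3
  obtain ⟨k, hk⟩ := Finsupp.ne_iff.1 he'
  have hdeg : expDeg e = expDeg e' := by simp only [expDeg_eq_sum, Fin.sum_univ_eight]; omega
  have h3 : e' 3 = 0 := by omega
  have key : e' 2 < e 2 ∨ e' 2 = e 2 ∧ e' 1 < e 1 := by
    fin_cases k <;> simp only [Fin.isValue, Fin.zero_eta, Fin.mk_one, Fin.reduceFinMk] at hk <;>
      omega
  refine Or.inr ⟨hdeg, ?_⟩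
  rcases key with h2 | ⟨h2, h1⟩
  · refine ⟨1, h2, fun q hq => ?_⟩
    obtain rfl : q = 0 := by omega
    show e 3 = e' 3
    omega
  · refine ⟨2, h1, fun q hq => ?_⟩
    obtain rfl | rfl : q = 0 ∨ q = 1 := by omega
    · show e 3 = e' 3
      omega
    · exact h2.symm

theorem isMinGen_cubicLeadExp (K : Type) [Field K] :
    IsMinGen (initialIdeal (rlexLT ord13) (toricIdeal K stExp)) cubicLeadExp :=
  isMinGen_initialIdeal_toricIdeal toricExp_cubicLeadExp
    (fun h => by simpa [cubicLeadExp, cubicTrailExp] using congrArg (· 3) h)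
    rlexLT_cubicTrailExp_cubicLeadExp fun _ hlt _ hfib hne =>
      rlexLT_asymm ord13 (rlexLT_of_toricExp_eq_of_lt_cubicLeadExp hlt hfib hne)

end StableSet

/-- **Example 1.7.**  For the toric ring of the stable set polytope of the
empty graph on three vertices, with respect to the reverse lexicographic order
induced by `x_4 < x_3 < x_2 < x_1 < x_8 < x_7 < x_6 < x_5`, the cubic monomial
`x_2 x_3 x_8` belongs to `G(in_rlex(I_A))`; in particular, the reduced Gröbner
basis of `I_A` with respect to this order is not quadratic — even though
`K[A]` is strongly Koszul. -/
theorem stableSet_cubic_minGen_but_stronglyKoszul (K : Type) [Field K] :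
    IsMinGen (initialIdeal (rlexLT ord13) (toricIdeal K stExp))
      (Finsupp.single 1 1 + Finsupp.single 2 1 + Finsupp.single 7 1) ∧
    (∀ G : Finset (MvPolynomial (Fin 8) K),
      IsReducedGB (rlexLT ord13) (toricIdeal K stExp) G →
        ¬ ∀ g ∈ G, IsQuadBinomial g) ∧
    ToricStronglyKoszul K stExp := by
  refine ⟨isMinGen_cubicLeadExp K, fun G hG hquad => ?_, toricStronglyKoszul_stExp K⟩
  obtain ⟨g, hg, hinit⟩ := exists_isInitialExp_of_isMinGen hG (isMinGen_cubicLeadExp K)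
  have hdeg := expDeg_eq_two_of_isQuadBinomial (hquad g hg) hinit.1
  rw [expDeg_cubicLeadExp] at hdeg
  omega

end
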